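/- Let V and W be finite-dimensional vector spaces over a field k, φ : V → W a linear map, E ⊆ W a subspace, and ε an alternating bilinear form on W. Then φ⋆L(E,ε) = L(φ⁻¹(E), φ*ε), where φ⁻¹(E) is the preimage subspace and (φ*ε)(x,y) := ε(φ(x), φ(y)). -/

import Mathlib

variable {k : Type*} [Field k] {V W : Type*} [AddCommGroup V] [Module k V]
  [AddCommGroup W] [Module k W]

/-- The subspace `L(E, ε) ⊆ W × W*` attached to a subspace `E ⊆ W` and a bilinear form `ε`. -/
def LSet (E : Submodule k W) (ε : W → W → k) : Set (W × Module.Dual k W) :=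
  {p | p.1 ∈ E ∧ ∀ y ∈ E, p.2 y = ε p.1 y}

/-- The pullback `φ⋆D = {(x, ξ ∘ φ) : (φ x, ξ) ∈ D}` of a subset `D ⊆ W × W*` along a linear
map `φ : V → W`. -/
def pullDirac (φ : V →ₗ[k] W) (D : Set (W × Module.Dual k W)) :
    Set (V × Module.Dual k V) :=
  {p | ∃ ξ : Module.Dual k W, p.2 = φ.dualMap ξ ∧ (φ p.1, ξ) ∈ D}

/-!
A pair `(x, η)` lies in `L(φ⁻¹E, φ*ε)` exactly when `φ x ∈ E` and `η` agrees with `ε (φ x) ∘ φ` on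
`φ⁻¹E`. To lift `η` to some `ξ ∈ W*` with `ξ ∘ φ = η` and `ξ = ε (φ x)` on `E`, note that
`η - ε (φ x) ∘ φ` vanishes on `φ⁻¹E = ker (V → W ⧸ E)`; over a field it therefore factors through
`W ⧸ E`, and adding `ε (φ x)` back gives `ξ`.
-/

namespace LinearMap

theorem exists_dualMap_eq_and_eqOn_of_eqOn_comap (φ : V →ₗ[k] W) (E : Submodule k W)
    (η : Module.Dual k V) (g : Module.Dual k W) (h : ∀ v, φ v ∈ E → η v = g (φ v)) :
    ∃ ξ : Module.Dual k W, φ.dualMap ξ = η ∧ ∀ w ∈ E, ξ w = g w := by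
  have hmem : η - φ.dualMap g ∈ range (E.mkQ ∘ₗ φ).dualMap := by
    rw [range_dualMap_eq_dualAnnihilator_ker, Submodule.mem_dualAnnihilator]
    intro v hv
    have hvE : φ v ∈ E := by simpa [ker_comp] using hv
    simp [h v hvE]
  obtain ⟨ζ, hζ⟩ := hmem
  refine ⟨ζ ∘ₗ E.mkQ + g, ?_, fun w hw => ?_⟩
  · rw [map_add, ← eq_sub_iff_add_eq, ← hζ]
    rfl
  · simp [(Submodule.Quotient.mk_eq_zero E).mpr hw]

end LinearMap

theorem pullDirac_LSet_general (φ : V →ₗ[k] W) (E : Submodule k W)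
    (ε : W →ₗ[k] W →ₗ[k] k) :
    pullDirac φ (LSet E (fun x y => ε x y)) =
      LSet (E.comap φ) (fun x y => ε (φ x) (φ y)) := by
  ext ⟨x, η⟩
  constructor
  · rintro ⟨ξ, rfl, hx, hξ⟩
    exact ⟨hx, fun y hy => hξ (φ y) hy⟩
  · rintro ⟨hx, hη⟩
    obtain ⟨ξ, hξφ, hξE⟩ :=
      φ.exists_dualMap_eq_and_eqOn_of_eqOn_comap E η (ε (φ x)) hη
    exact ⟨ξ, hξφ.symm, hx, hξE⟩

/-- `φ⋆ L(E, ε) = L(φ⁻¹(E), φ*ε)`, where `(φ*ε)(x, y) = ε(φ x, φ y)`. -/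
theorem pullDirac_LSet [FiniteDimensional k V] [FiniteDimensional k W]
    (φ : V →ₗ[k] W) (E : Submodule k W)
    (ε : W →ₗ[k] W →ₗ[k] k) (hεalt : ∀ x, ε x x = 0) :
    pullDirac φ (LSet E (fun x y => ε x y)) =
      LSet (E.comap φ) (fun x y => ε (φ x) (φ y)) :=
  pullDirac_LSet_general φ E ε
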